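/- arXiv:math/0311300 — 5 statements merged into one kernel-verified Lean document; each statement's English description precedes it below -/
import Mathlib

section
/- Let I be a Borel-fixed monomial ideal in R = k[x_1,...,x_n] and let x^A be a monomial of degree t. If the dimension over k of the degree-t graded piece of R/I is strictly less than the number of monomials that Borel-specialize to x^A, then x^A belongs to I. -/
open MvPolynomial

noncomputable section

/-- The total degree of a monomial exponent vector. -/
def monDeg {n : ℕ} (A : Fin n →₀ ℕ) : ℕ := A.sum fun _ e => e

/-- `BorelSpec A B` : the monomial `x^B` is a Borel specialization of `x^A`,
i.e. `x^B` is obtained from `x^A` by replacing every variable `x_i` of `x^A`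
by a variable `x_{f i}` with `f i ≤ i`. -/
def BorelSpec {n : ℕ} (A B : Fin n →₀ ℕ) : Prop :=
  ∃ f : Fin n → Fin n, (∀ i, f i ≤ i) ∧ B = A.mapDomain f

/-- `borelPSet A` : the set of (exponent vectors of) monomials that can be
Borel-specialized to `x^A`. -/
def borelPSet {n : ℕ} (A : Fin n →₀ ℕ) : Set (Fin n →₀ ℕ) := {C | BorelSpec C A}

/-- A monomial ideal: an ideal generated by monomials. -/
def IsMonomialIdeal {k : Type*} [Field k] {n : ℕ} (I : Ideal (MvPolynomial (Fin n) k)) : Prop :=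
  ∃ S : Set (Fin n →₀ ℕ), I = Ideal.span ((fun A => (monomial A (1 : k))) '' S)

/-- Borel-fixed: `I` is fixed by every invertible linear substitution sending each
variable `x_i` to a linear combination of the variables `x_j` with `j ≤ i`
(the Borel group of upper triangular invertible matrices). -/
def IsBorelFixed {k : Type*} [Field k] {n : ℕ} (I : Ideal (MvPolynomial (Fin n) k)) : Prop :=
  ∀ g : Matrix (Fin n) (Fin n) k, IsUnit g.det → (∀ i j : Fin n, i < j → g i j = 0) →
    I.map (aeval (fun i => ∑ j, MvPolynomial.C (g i j) * X j) :
      MvPolynomial (Fin n) k →ₐ[k] MvPolynomial (Fin n) k) = I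

/-- The Hilbert function `t ↦ dim_k (R/I)_t`. -/
def hilb {k : Type*} [Field k] {n : ℕ} (I : Ideal (MvPolynomial (Fin n) k)) (t : ℕ) : ℕ :=
  Module.finrank k
    ((homogeneousSubmodule (Fin n) k t).map (Ideal.Quotient.mkₐ k I).toLinearMap)

/-- `Q` generates a reduction of `R/I` : `(Q + I)_t = R_t` for all large `t`. -/
def IsReductionOf {k : Type*} [Field k] {n : ℕ} (Q I : Ideal (MvPolynomial (Fin n) k)) : Prop :=
  ∃ N : ℕ, ∀ t ≥ N, ∀ p : MvPolynomial (Fin n) k, p.IsHomogeneous t → p ∈ Q ⊔ I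

/-- The reduction number `r_Q(R/I)` : the least `r` such that
`(Q + I)_t = R_t` for all `t > r`. -/
def redNum {k : Type*} [Field k] {n : ℕ} (Q I : Ideal (MvPolynomial (Fin n) k)) : ℕ :=
  sInf {r : ℕ | ∀ t > r, ∀ p : MvPolynomial (Fin n) k, p.IsHomogeneous t → p ∈ Q ⊔ I}

/-- `Q` is an `s`-reduction of `R/I` : it is generated by `s` linear forms and is a
reduction of `R/I`. -/
def IsSReduction {k : Type*} [Field k] {n : ℕ} (s : ℕ)
    (Q I : Ideal (MvPolynomial (Fin n) k)) : Prop :=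
  (∃ z : Fin s → MvPolynomial (Fin n) k,
      (∀ i, (z i).IsHomogeneous 1) ∧ Q = Ideal.span (Set.range z)) ∧
  IsReductionOf Q I

/-- The `s`-reduction number `r_s(R/I)` : the minimum of `r_Q(R/I)` over all
`s`-reductions `Q` of `R/I`. -/
def sRedNum {k : Type*} [Field k] {n : ℕ} (s : ℕ) (I : Ideal (MvPolynomial (Fin n) k)) : ℕ :=
  sInf {r : ℕ | ∃ Q, IsSReduction s Q I ∧ redNum Q I = r}

/-- Strong stability condition on a monomial ideal: if `x^A ∈ I` is divisible by `x_i`,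
then `x^A x_j / x_i ∈ I` for all `j ≤ i`. -/
def StronglyStable {k : Type*} [Field k] {n : ℕ} (I : Ideal (MvPolynomial (Fin n) k)) : Prop :=
  ∀ (A : Fin n →₀ ℕ) (i j : Fin n), monomial A (1 : k) ∈ I → A i ≠ 0 → j ≤ i →
    monomial (A - Finsupp.single i 1 + Finsupp.single j 1) (1 : k) ∈ I

/-- Lex-segment condition: if `x^A ∈ I` and `x^B ≥ x^A` in the lexicographic order
(with `x_1 > x_2 > ⋯ > x_n`) and `deg x^B = deg x^A`, then `x^B ∈ I`. -/
def IsLexSegment {k : Type*} [Field k] {n : ℕ} (I : Ideal (MvPolynomial (Fin n) k)) : Prop :=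
  ∀ A B : Fin n →₀ ℕ, monomial A (1 : k) ∈ I → monDeg B = monDeg A →
    Finsupp.Lex (· < ·) (· < ·) A B → monomial B (1 : k) ∈ I

/-- A homogeneous ideal: closed under taking homogeneous components. -/
def IsHomogeneousIdeal {k : Type*} [Field k] {n : ℕ} (I : Ideal (MvPolynomial (Fin n) k)) : Prop :=
  ∀ p ∈ I, ∀ t : ℕ, homogeneousComponent t p ∈ I

/-- The ideal generated by the last `s` variables `x_{n-s+1}, …, x_n`. -/
def lastVars (k : Type*) [Field k] (n s : ℕ) : Ideal (MvPolynomial (Fin n) k) :=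
  Ideal.span ((fun i => (X i : MvPolynomial (Fin n) k)) '' {i : Fin n | n - s ≤ (i : ℕ)})

/-! A Borel-fixed monomial ideal is closed under Borel specialization. For `j < i` the
transvection `x_i ↦ x_i + x_j` lies in the Borel group and sends `x^E x_i^c` (with `x_i ∤ x^E`)
to `x^E (x_i + x_j)^c`, in which `x^E x_j^c` has coefficient `1` in every characteristic; since
`I` is monomial, `x^E x_j^c ∈ I`. Applying such moves to the variables displaced by `f`, lowest
first, carries `x^D ∈ I` to `x^{f_* D} ∈ I`. So if `x^A ∉ I`, no monomial of `P(x^A)` is in `I`.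
Monomials outside a monomial ideal stay linearly independent modulo `I`, and all of `P(x^A)` has
degree `t`, whence `|P(x^A)| ≤ dim_k (R/I)_t`. -/

theorem monDeg_mapDomain {n : ℕ} (C : Fin n →₀ ℕ) (f : Fin n → Fin n) :
    monDeg (C.mapDomain f) = monDeg C :=
  Finsupp.sum_mapDomain_index (fun _ => rfl) fun _ _ _ => rfl

namespace MvPolynomial

variable {k : Type*} [Field k] {n : ℕ}

theorem coeff_single_X_add_X_pow {i j : Fin n} (hij : i ≠ j) (c : ℕ) :
    coeff (Finsupp.single j c) ((X i + X j : MvPolynomial (Fin n) k) ^ c) = 1 := by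
  rw [add_pow, coeff_sum, Finset.sum_eq_single 0]
  · simp [X_pow_eq_monomial, coeff_monomial]
  · intro b _ hb
    rw [X_pow_eq_monomial, X_pow_eq_monomial, monomial_mul, one_mul, ← map_natCast C, mul_comm,
      C_mul_monomial, coeff_monomial, if_neg]
    intro h
    simpa [Finsupp.single_apply, hij, hij.symm, hb] using DFunLike.congr_fun h i
  · simp

theorem sum_transvection_one_mul_X (i j : Fin n) :
    (fun l => ∑ m, C (Matrix.transvection i j (1 : k) l m) * X m) =
      Function.update X i (X i + X j) := by
  funext l
  rcases eq_or_ne l i with rfl | hl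
  · simp [Matrix.transvection, Matrix.one_apply, Matrix.single_apply, add_mul,
      Finset.sum_add_distrib]
  · simp [Matrix.transvection, Matrix.one_apply, hl, hl.symm]

theorem aeval_update_monomial_add_single {E : Fin n →₀ ℕ} {i : Fin n} (hE : E i = 0)
    (q : MvPolynomial (Fin n) k) (c : ℕ) :
    aeval (Function.update X i q) (monomial (E + Finsupp.single i c) (1 : k)) =
      monomial E 1 * q ^ c := by
  have hfix : aeval (Function.update X i q) (monomial E (1 : k)) = monomial E 1 := by
    rw [aeval_monomial, monomial_eq, map_one, C_1]
    congr 1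
    refine Finsupp.prod_congr fun l hl => ?_
    rw [Function.update_of_ne (by rintro rfl; exact Finsupp.mem_support_iff.mp hl hE)]
  rw [monomial_add_single, map_mul, map_pow, aeval_X, Function.update_self, hfix]

end MvPolynomial

section MonomialIdeal

variable {k : Type*} [Field k] {n : ℕ} {I : Ideal (MvPolynomial (Fin n) k)}

theorem IsMonomialIdeal.monomial_mem_of_mem_support (hmon : IsMonomialIdeal I)
    {p : MvPolynomial (Fin n) k} (hp : p ∈ I) {m : Fin n →₀ ℕ}
    (hm : m ∈ p.support) : monomial m (1 : k) ∈ I := by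
  obtain ⟨S, rfl⟩ := hmon
  obtain ⟨s, hs, hsm⟩ := mem_ideal_span_monomial_image.mp hp m hm
  simpa [monomial_mul, add_tsub_cancel_of_le hsm] using
    Ideal.mul_mem_right (monomial (m - s) (1 : k)) _
      (Ideal.subset_span (Set.mem_image_of_mem (monomial · 1) hs))

theorem IsMonomialIdeal.linearIndependent_mk_monomial
    (hmon : IsMonomialIdeal I) {S : Set (Fin n →₀ ℕ)} (hS : ∀ D ∈ S, monomial D (1 : k) ∉ I) :
    LinearIndependent k fun D : S => Ideal.Quotient.mkₐ k I (monomial (D : Fin n →₀ ℕ) 1) := by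
  have hmonomials : LinearIndependent k fun D : S => monomial (D : Fin n →₀ ℕ) (1 : k) := by
    have := (basisMonomials (Fin n) k).linearIndependent.comp ((↑) : S → _) Subtype.val_injective
    rwa [coe_basisMonomials] at this
  refine hmonomials.map (f := (Ideal.Quotient.mkₐ k I).toLinearMap) ?_
  rw [Submodule.disjoint_def]
  intro p hp hpI
  have hsupp : p ∈ restrictSupport k S := by
    rw [restrictSupport_eq_span]
    refine Submodule.span_mono ?_ hp
    rintro _ ⟨D, rfl⟩
    exact ⟨D, D.2, rfl⟩
  have hpI : p ∈ I := Ideal.Quotient.eq_zero_iff_mem.mp hpI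
  rw [← support_eq_empty, Finset.eq_empty_iff_forall_notMem]
  exact fun m hm => hS m (hsupp hm) (hmon.monomial_mem_of_mem_support hpI hm)

theorem IsMonomialIdeal.ncard_le_hilb
    (hmon : IsMonomialIdeal I) {S : Set (Fin n →₀ ℕ)} (hfin : S.Finite) {t : ℕ}
    (hdeg : ∀ D ∈ S, monDeg D = t) (hS : ∀ D ∈ S, monomial D (1 : k) ∉ I) :
    S.ncard ≤ hilb I t := by
  have : Fintype S := hfin.fintype
  have : Module.Finite k (homogeneousSubmodule (Fin n) k t) :=
    Module.Finite.iff_fg.mpr (homogeneousSubmodule_fg _ _ t)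
  have hspan : Submodule.span k (Set.range fun D : S =>
      Ideal.Quotient.mkₐ k I (monomial (D : Fin n →₀ ℕ) (1 : k))) ≤
      (homogeneousSubmodule (Fin n) k t).map (Ideal.Quotient.mkₐ k I).toLinearMap := by
    rw [Submodule.span_le]
    rintro _ ⟨D, rfl⟩
    exact ⟨monomial D 1, isHomogeneous_monomial _ (hdeg D D.2), rfl⟩
  rw [← Nat.card_coe_set_eq, Nat.card_eq_fintype_card,
    ← finrank_span_eq_card (hmon.linearIndependent_mk_monomial hS)]
  exact Submodule.finrank_mono hspan

theorem IsBorelFixed.monomial_add_single_mem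
    (hmon : IsMonomialIdeal I) (hborel : IsBorelFixed I) {E : Fin n →₀ ℕ} {i j : Fin n}
    {c : ℕ} (hE : E i = 0) (hji : j ≤ i) (h : monomial (E + Finsupp.single i c) (1 : k) ∈ I) :
    monomial (E + Finsupp.single j c) (1 : k) ∈ I := by
  rcases hji.eq_or_lt with rfl | hlt
  · exact h
  have hlower : ∀ a b : Fin n, a < b → Matrix.transvection i j (1 : k) a b = 0 := by
    intro a b hab
    have : ¬(i = a ∧ j = b) := by rintro ⟨rfl, rfl⟩; exact hab.not_gt hlt
    simp [Matrix.transvection, hab.ne, this]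
  have hfixed := hborel _ (by rw [Matrix.det_transvection_of_ne _ _ hlt.ne']; exact isUnit_one)
    hlower
  rw [sum_transvection_one_mul_X] at hfixed
  have hmem : monomial E 1 * (X i + X j) ^ c ∈ I := by
    rw [← aeval_update_monomial_add_single hE, ← hfixed]
    exact Ideal.mem_map_of_mem _ h
  refine hmon.monomial_mem_of_mem_support hmem ?_
  rw [mem_support_iff, coeff_monomial_mul, coeff_single_X_add_X_pow hlt.ne', one_mul]
  exact one_ne_zero

theorem IsBorelFixed.monomial_mapDomain_mem
    (hmon : IsMonomialIdeal I) (hborel : IsBorelFixed I) {D : Fin n →₀ ℕ}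
    (hD : monomial D (1 : k) ∈ I) {f : Fin n → Fin n} (hf : ∀ i, f i ≤ i) :
    monomial (D.mapDomain f) (1 : k) ∈ I := by
  classical
  suffices key : ∀ (s : Finset (Fin n)) (f : Fin n → Fin n) (D : Fin n →₀ ℕ), (∀ i, f i ≤ i) →
      (∀ i ∉ s, f i = i) → monomial D (1 : k) ∈ I → monomial (D.mapDomain f) (1 : k) ∈ I from
    key Finset.univ f D hf (by simp) hD
  intro s
  induction s using Finset.induction_on_min with
  | empty =>
    intro f D _ hid hD
    have hfid : f = id := funext fun i => hid i (Finset.notMem_empty i)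
    rwa [hfid, Finsupp.mapDomain_id]
  | insert a s has ih =>
    intro f D hf hid hD
    set f' := Function.update f a a
    have hf' : ∀ i, f' i ≤ i := by
      intro i
      rcases eq_or_ne i a with rfl | hia
      · simp [f']
      · simpa [f', hia] using hf i
    have hf'_fix : ∀ i ∉ s, f' i = i := by
      intro i hi
      rcases eq_or_ne i a with rfl | hia
      · simp [f']
      · simpa [f', hia] using hid i (by simp [hia, hi])
    have hf'_fa : f' (f a) = f a := by
      rcases eq_or_ne (f a) a with hfa | hfa
      · simp [f', hfa]
      · have hfa_s : f a ∉ s := fun h => (has _ h).not_ge (hf a)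
        simpa [f', hfa] using hid (f a) (by simp [hfa, hfa_s])
    have hsplit : D.mapDomain f = (D.erase a + Finsupp.single (f a) (D a)).mapDomain f' := by
      conv_lhs => rw [← D.erase_add_single a]
      rw [Finsupp.mapDomain_add, Finsupp.mapDomain_add, Finsupp.mapDomain_single,
        Finsupp.mapDomain_single, hf'_fa]
      congr 1
      refine Finsupp.mapDomain_congr fun i hi => ?_
      rw [Finsupp.support_erase, Finset.mem_erase] at hi
      simp [f', hi.1]
    rw [hsplit]
    refine ih f' _ hf' hf'_fix (hborel.monomial_add_single_mem hmon Finsupp.erase_same (hf a) ?_)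
    rwa [Finsupp.erase_add_single]

end MonomialIdeal

/-- If `dim_k (R/I)_t < |P(x^A)|` for `t = deg x^A`, then `x^A ∈ I`. -/
theorem stmt1 {k : Type*} [Field k] {n : ℕ} (I : Ideal (MvPolynomial (Fin n) k))
    (hmon : IsMonomialIdeal I) (hborel : IsBorelFixed I)
    (A : Fin n →₀ ℕ) (t : ℕ) (ht : monDeg A = t)
    (h : hilb I t < (borelPSet A).ncard) :
    monomial A (1 : k) ∈ I := by
  by_contra hA
  have hfin : (borelPSet A).Finite := Set.finite_of_ncard_pos (Nat.zero_lt_of_lt h)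
  refine h.not_ge (hmon.ncard_le_hilb hfin ?_ ?_)
  · rintro C ⟨f, -, rfl⟩
    rwa [monDeg_mapDomain] at ht
  · rintro C ⟨f, hf, rfl⟩ hC
    exact hA (hborel.monomial_mapDomain_mem hmon hC hf)
end
end

section
/- Let x^A = x_{i_1}^{α_{i_1}} ··· x_{i_s}^{α_{i_s}} be a monomial in k[x_1,...,x_n] with all α_{i_t} > 0 and 1 ≤ i_1 < ... < i_s ≤ n, and set i_{s+1} = n+1. Then the number of monomials that Borel-specialize to x^A is at least Σ_{t=1}^{s} C(α_{i_1}+···+α_{i_t} + i_{t+1} - i_t - 1, i_{t+1} - i_t - 1) − s + 1. -/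
open MvPolynomial

noncomputable section

/-- `i_{t+1} - i_t - 1` in 0-based indexing, with the convention `i_{s+1} = n+1`. -/
def gapLen {n : ℕ} (s : ℕ) (e : Fin s → Fin n) (t : Fin s) : ℕ :=
  (if h : (t : ℕ) + 1 < s then ((e ⟨(t : ℕ) + 1, h⟩ : Fin n) : ℕ) else n) - (e t : ℕ) - 1

/-- The partial sum `α_{i_1} + ⋯ + α_{i_t}`. -/
def partSum {s : ℕ} (α : Fin s → ℕ) (t : Fin s) : ℕ :=
  ∑ u ∈ Finset.univ.filter (fun u => u ≤ t), α u

/-!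
List the variable indices of `x^A` as a nondecreasing sequence `a_1 ≤ ⋯ ≤ a_d`, block `t`
occupying the positions `S_{t-1} < j ≤ S_t` (where `S_t = α_{i_1} + ⋯ + α_{i_t}`). Shift the
first `S_t` entries by a nondecreasing sequence `δ` with values in `[0, g_t]`,
`g_t = i_{t+1} - i_t - 1`: the shifted entries stay below `i_{t+1}`, so `c = a + δ` is still
nondecreasing, `c ≥ a`, and `c_j = c_{j'}` forces `a_j = a_{j'}`. Thus `x_{c_j} ↦ x_{a_j}` is a
well-defined Borel specialization of `x^c` to `x^A`. For fixed `t` the shifts correspond to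
multisets of size `S_t` with entries in `[0, g_t]`, giving `C(S_t + g_t, g_t)` distinct
monomials. A monomial produced for two indices `t < u` comes from a shift that is nondecreasing
on the first `S_u` positions yet vanishes at position `S_t + 1`, so it is `x^A` itself: the `s`
families overlap only in `x^A`.
-/

open Finset

lemma Finset.sum_card_sub_one_add_one_le_card_insert_biUnion {ι α : Type*} [DecidableEq α]
    (s : Finset ι) (F : ι → Finset α) (x : α)
    (h : (s : Set ι).Pairwise fun i j => F i ∩ F j ⊆ {x}) :
    ∑ i ∈ s, (#(F i) - 1) + 1 ≤ #(insert x (s.biUnion F)) := by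
  have hdisj : (s : Set ι).PairwiseDisjoint fun i => (F i).erase x := by
    intro i hi j hj hij
    refine disjoint_left.2 fun y hyi hyj => (mem_erase.1 hyi).1 ?_
    exact mem_singleton.1 (h hi hj hij (mem_inter.2 ⟨(mem_erase.1 hyi).2, (mem_erase.1 hyj).2⟩))
  calc ∑ i ∈ s, (#(F i) - 1) + 1 ≤ ∑ i ∈ s, #((F i).erase x) + 1 := by
        gcongr with i; exact pred_card_le_card_erase
    _ = #(insert x (s.biUnion fun i => (F i).erase x)) := by
        rw [card_insert_of_notMem (by simp), card_biUnion hdisj]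
    _ ≤ #(insert x (s.biUnion F)) :=
        card_le_card (insert_subset_insert _ (biUnion_mono fun i _ => erase_subset x (F i)))

lemma Finset.sum_tsub_card_le_sum_tsub_one {ι : Type*} (s : Finset ι) (f : ι → ℕ) :
    ∑ i ∈ s, f i - #s ≤ ∑ i ∈ s, (f i - 1) := by
  refine tsub_le_iff_right.2 ?_
  calc ∑ i ∈ s, f i ≤ ∑ i ∈ s, (f i - 1 + 1) := sum_le_sum fun i _ => by omega
    _ = ∑ i ∈ s, (f i - 1) + #s := by simp [sum_add_distrib]

lemma Finset.card_le_ncard_of_coe_subset_image {α β : Type*} {f : α → β} (hf : f.Injective)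
    {P : Set α} (hP : P.Finite) {S : Finset β} (hS : ↑S ⊆ f '' P) : #S ≤ P.ncard := by
  rw [← Set.ncard_coe_finset, ← Set.ncard_image_of_injective P hf]
  exact Set.ncard_le_ncard hS (hP.image f)

def seqMonomial {ι : Type*} [Fintype ι] (c : ι → ℕ) : ℕ →₀ ℕ :=
  ∑ j, Finsupp.single (c j) 1

lemma seqMonomial_apply {ι : Type*} [Fintype ι] (c : ι → ℕ) (x : ℕ) :
    seqMonomial c x = #{j | c j = x} := by
  simp [seqMonomial, Finsupp.finsetSum_apply, Finsupp.single_apply]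

lemma Monotone.eq_of_seqMonomial_eq {d : ℕ} {c c' : Fin d → ℕ} (hc : Monotone c)
    (hc' : Monotone c') (h : seqMonomial c = seqMonomial c') : c = c' := by
  have hvals : univ.val.map c = univ.val.map c' := by
    ext x
    have hx := DFunLike.congr_fun h x
    simp only [seqMonomial_apply] at hx
    rw [Multiset.count_map, Multiset.count_map]
    simp only [eq_comm (a := x)]
    exact hx
  rw [Fin.univ_val_map, Fin.univ_val_map, Multiset.coe_eq_coe] at hvals
  exact List.ofFn_injective <|
    hvals.eq_of_sortedLE (List.sortedLE_ofFn_iff.2 hc) (List.sortedLE_ofFn_iff.2 hc')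

lemma seqMonomial_mem_image_borelPSet {n : ℕ} {ι : Type*} [Fintype ι] {a c : ι → ℕ}
    (hac : ∀ j, a j ≤ c j) (hcn : ∀ j, c j < n) (hfac : a.FactorsThrough c)
    {A : Fin n →₀ ℕ} (hA : A.mapDomain Fin.val = seqMonomial a) :
    seqMonomial c ∈ Finsupp.mapDomain Fin.val '' borelPSet A := by
  set F : ℕ → ℕ := Function.extend c a id
  have hFc : ∀ j, F (c j) = a j := hfac.extend_apply id
  have hF : ∀ x, F x ≤ x := by
    intro x
    by_cases hx : ∃ j, c j = x
    · obtain ⟨j, rfl⟩ := hx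
      exact (hFc j).trans_le (hac j)
    · exact (Function.extend_apply' _ _ _ hx).le
  refine ⟨∑ j, Finsupp.single ⟨c j, hcn j⟩ 1,
    ⟨fun i => ⟨F i, (hF i).trans_lt i.2⟩, fun i => hF i, ?_⟩, ?_⟩
  · apply Finsupp.mapDomain_injective Fin.val_injective
    rw [hA, ← Finsupp.mapDomain_comp]
    simp [seqMonomial, Finsupp.mapDomain_finsetSum, hFc]
  · simp [seqMonomial, Finsupp.mapDomain_finsetSum]

lemma borelPSet_finite {n : ℕ} (A : Fin n →₀ ℕ) : (borelPSet A).Finite :=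
  (Finsupp.finite_of_degree_le A.degree).subset fun C ⟨f, _, hC⟩ => by
    show C.degree ≤ A.degree
    rw [hC, Finsupp.degree_mapDomain]

namespace Sym

variable {α : Type*} [LinearOrder α] {p : ℕ}

def sortFn (D : Sym α p) : Fin p → α :=
  fun j => (D.1.sort (· ≤ ·)).get (j.cast (by simp))

lemma ofFn_sortFn (D : Sym α p) :
    List.ofFn D.sortFn = D.1.sort (· ≤ ·) :=
  List.ext_get (by simp) fun _ _ _ => by simp [sortFn]; rfl

lemma monotone_sortFn (D : Sym α p) :
    Monotone D.sortFn := by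
  rw [← List.sortedLE_ofFn_iff, ofFn_sortFn]
  exact (Multiset.pairwise_sort _ _).sortedLE

lemma sortFn_injective :
    Function.Injective (sortFn : Sym α p → Fin p → α) := by
  intro D D' h
  have := congrArg List.ofFn h
  rw [ofFn_sortFn, ofFn_sortFn] at this
  exact Subtype.ext (by rw [← Multiset.sort_eq D.1 (· ≤ ·), this, Multiset.sort_eq])

lemma monotone_val_sortFn {m : ℕ} (D : Sym (Fin m) p) :
    Monotone fun i => (D.sortFn i : ℕ) :=
  fun _ _ h => D.monotone_sortFn h

lemma val_sortFn_le {G : ℕ} (D : Sym (Fin (G + 1)) p) (i : Fin p) : (D.sortFn i : ℕ) ≤ G :=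
  Nat.lt_succ_iff.1 (D.sortFn i).2

end Sym

def prefixExtend {d p : ℕ} (δ : Fin p → ℕ) : Fin d → ℕ :=
  fun j => if h : (j : ℕ) < p then δ ⟨j, h⟩ else 0

def IsGapAt {d : ℕ} (a : Fin d → ℕ) (p G b : ℕ) : Prop :=
  ∀ j : Fin d, ((j : ℕ) < p → a j + G < b) ∧ (p ≤ (j : ℕ) → b ≤ a j)

def shiftFamily {d : ℕ} (a : Fin d → ℕ) (p G : ℕ) : Finset (ℕ →₀ ℕ) :=
  univ.image fun D : Sym (Fin (G + 1)) p =>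
    seqMonomial (a + prefixExtend fun i => (D.sortFn i : ℕ))

section ShiftFamily

variable {d p G b : ℕ} {a : Fin d → ℕ}

lemma IsGapAt.le_and_le_or_lt_of_le (ha : Monotone a) (hgap : IsGapAt a p G b) {δ : Fin p → ℕ}
    (hδ : Monotone δ) (hδG : ∀ i, δ i ≤ G) {j j' : Fin d} (hjj' : j ≤ j') :
    (a j ≤ a j' ∧ prefixExtend δ j ≤ prefixExtend δ j') ∨
      a j + prefixExtend δ j < a j' + prefixExtend δ j' := by
  simp only [prefixExtend]
  split_ifs with hj hj' hj''
  · exact Or.inl ⟨ha hjj', hδ (Fin.mk_le_mk.2 hjj')⟩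
  · have := (hgap j).1 hj
    have := (hgap j').2 (not_lt.1 hj')
    have := hδG ⟨j, hj⟩
    right; omega
  · exact absurd (lt_of_le_of_lt (Fin.le_iff_val_le_val.1 hjj') hj'') hj
  · exact Or.inl ⟨ha hjj', le_rfl⟩

lemma IsGapAt.monotone_add_prefixExtend (ha : Monotone a) (hgap : IsGapAt a p G b)
    {δ : Fin p → ℕ} (hδ : Monotone δ) (hδG : ∀ i, δ i ≤ G) :
    Monotone (a + prefixExtend δ) := fun j j' hjj' => by
  rcases hgap.le_and_le_or_lt_of_le ha hδ hδG hjj' with ⟨h, h'⟩ | h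
  · exact add_le_add h h'
  · exact h.le

lemma IsGapAt.factorsThrough_add_prefixExtend (ha : Monotone a) (hgap : IsGapAt a p G b)
    {δ : Fin p → ℕ} (hδ : Monotone δ) (hδG : ∀ i, δ i ≤ G) :
    a.FactorsThrough (a + prefixExtend δ) := by
  have key : ∀ j j', j ≤ j' →
      a j + prefixExtend δ j = a j' + prefixExtend δ j' → a j = a j' := by
    intro j j' hjj' hc
    rcases hgap.le_and_le_or_lt_of_le ha hδ hδG hjj' with ⟨h, h'⟩ | h <;> omega
  intro j j' hc
  rcases le_total j j' with h | h
  · exact key j j' h hc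
  · exact (key j' j h hc.symm).symm

lemma IsGapAt.monotone_add_prefixExtend_sortFn (ha : Monotone a) (hgap : IsGapAt a p G b)
    (D : Sym (Fin (G + 1)) p) : Monotone (a + prefixExtend fun i => (D.sortFn i : ℕ)) :=
  hgap.monotone_add_prefixExtend ha D.monotone_val_sortFn D.val_sortFn_le

lemma IsGapAt.shiftFamily_subset_image_borelPSet {n : ℕ} (ha : Monotone a)
    (hgap : IsGapAt a p G b) (han : ∀ j, a j < n) (hbn : b ≤ n) {A : Fin n →₀ ℕ}
    (hA : A.mapDomain Fin.val = seqMonomial a) :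
    ↑(shiftFamily a p G) ⊆ Finsupp.mapDomain Fin.val '' borelPSet A := by
  intro C hC
  simp only [shiftFamily, coe_image, coe_univ, Set.image_univ, Set.mem_range] at hC
  obtain ⟨D, rfl⟩ := hC
  refine seqMonomial_mem_image_borelPSet (fun j => Nat.le_add_right _ _) (fun j => ?_)
    (hgap.factorsThrough_add_prefixExtend ha D.monotone_val_sortFn D.val_sortFn_le) hA
  simp only [prefixExtend]
  split_ifs with hj
  · exact ((Nat.add_le_add_left (D.val_sortFn_le _) _).trans_lt ((hgap j).1 hj)).trans_le hbn
  · simpa using han j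

lemma IsGapAt.card_shiftFamily (ha : Monotone a) (hgap : IsGapAt a p G b) (hpd : p ≤ d) :
    #(shiftFamily a p G) = (p + G).choose G := by
  rw [shiftFamily, card_image_of_injective, card_univ, Sym.card_sym_eq_choose, Fintype.card_fin,
    show G + 1 + p - 1 = p + G by omega, Nat.choose_symm_add]
  intro D D' h
  have hext := (hgap.monotone_add_prefixExtend_sortFn ha D).eq_of_seqMonomial_eq
    (hgap.monotone_add_prefixExtend_sortFn ha D') h
  refine Sym.sortFn_injective (funext fun i => Fin.ext ?_)
  simpa [prefixExtend] using congrFun hext ⟨i, i.2.trans_le hpd⟩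

lemma prefixExtend_eq_zero_of_eq {p' : ℕ} {δ : Fin p → ℕ} {δ' : Fin p' → ℕ}
    (hδ' : Monotone δ') (hpp' : p < p') (hp'd : p' ≤ d)
    (h : (prefixExtend δ : Fin d → ℕ) = prefixExtend δ') :
    (prefixExtend δ' : Fin d → ℕ) = 0 := by
  have hp : prefixExtend δ' (⟨p, hpp'.trans_le hp'd⟩ : Fin d) = 0 := by
    rw [← h]; simp [prefixExtend]
  funext j
  by_cases hj : p ≤ j
  · rw [← h]; simp [prefixExtend, hj]
  · refine Nat.eq_zero_of_le_zero (hp ▸ ?_)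
    simp only [prefixExtend, dif_pos (hpp'.trans' (not_le.1 hj)), dif_pos hpp']
    exact hδ' (Fin.mk_le_mk.2 (not_le.1 hj).le)

lemma IsGapAt.shiftFamily_inter_subset {p' G' b' : ℕ} (ha : Monotone a)
    (hgap : IsGapAt a p G b) (hgap' : IsGapAt a p' G' b') (hpp' : p < p') (hp'd : p' ≤ d) :
    shiftFamily a p G ∩ shiftFamily a p' G' ⊆ {seqMonomial a} := by
  intro C hC
  simp only [shiftFamily, mem_inter, mem_image, mem_univ, true_and] at hC
  obtain ⟨⟨D, rfl⟩, ⟨D', hD'⟩⟩ := hC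
  have hext := (hgap'.monotone_add_prefixExtend_sortFn ha D').eq_of_seqMonomial_eq
    (hgap.monotone_add_prefixExtend_sortFn ha D) hD'
  have hzero := prefixExtend_eq_zero_of_eq D'.monotone_val_sortFn hpp' hp'd
    (add_left_cancel hext).symm
  rw [mem_singleton, ← hD', hzero, add_zero]

end ShiftFamily

section Blocks

variable {n s : ℕ} (e : Fin s → Fin n) (α : Fin s → ℕ)

def blockSeq : Fin (∑ t, α t) → ℕ := fun j => e (finSigmaFinEquiv.symm j).1

lemma seqMonomial_blockSeq :
    seqMonomial (blockSeq e α) = (∑ t, Finsupp.single (e t) (α t)).mapDomain Fin.val := by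
  rw [seqMonomial]
  unfold blockSeq
  rw [Equiv.sum_comp finSigmaFinEquiv.symm (fun k => Finsupp.single ((e k.1 : Fin n) : ℕ) 1),
    Fintype.sum_sigma]
  simp [Finsupp.mapDomain_finsetSum]

lemma sum_castLE_eq_sum_Iio (u : Fin s) :
    ∑ i : Fin u, α (Fin.castLE u.2.le i) = ∑ i ∈ Iio u, α i := by
  refine (Finset.sum_map univ (Fin.castLEEmb u.2.le) α).symm.trans ?_
  congr 1
  ext i
  simp only [mem_map, mem_univ, true_and, mem_Iio]
  refine ⟨fun ⟨k, hk⟩ => hk ▸ k.2, fun hi => ⟨⟨i, hi⟩, rfl⟩⟩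

lemma partSum_eq_sum_Iic (t : Fin s) : partSum α t = ∑ i ∈ Iic t, α i := by
  rw [partSum, filter_ge_eq_Iic]

lemma lt_partSum_iff (j : Fin (∑ t, α t)) (t : Fin s) :
    (j : ℕ) < partSum α t ↔ (finSigmaFinEquiv.symm j).1 ≤ t := by
  obtain ⟨⟨u, r⟩, rfl⟩ := finSigmaFinEquiv.surjective j
  rw [Equiv.symm_apply_apply, finSigmaFinEquiv_apply, sum_castLE_eq_sum_Iio, partSum_eq_sum_Iic]
  constructor
  · intro h
    by_contra! htu
    have := sum_le_sum_of_subset (f := α) fun i hi => mem_Iio.2 ((mem_Iic.1 hi).trans_lt htu)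
    omega
  · intro hut
    have h1 := sum_le_sum_of_subset (f := α) (Iic_subset_Iic.2 hut)
    rw [← Iio_insert, sum_insert (by simp)] at h1
    have := r.2
    omega

lemma monotone_blockSeq (he : Monotone e) : Monotone (blockSeq e α) := fun j j' hjj' => by
  have hblock : (finSigmaFinEquiv.symm j).1 ≤ (finSigmaFinEquiv.symm j').1 :=
    (lt_partSum_iff α j _).1 ((Fin.le_def.1 hjj').trans_lt ((lt_partSum_iff α j' _).2 le_rfl))
  exact he hblock

def gapEnd (t : Fin s) : ℕ := if h : (t : ℕ) + 1 < s then e ⟨t + 1, h⟩ else n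

lemma gapEnd_le (t : Fin s) : gapEnd e t ≤ n := by
  unfold gapEnd
  split_ifs
  exacts [(e _).2.le, le_rfl]

lemma isGapAt_blockSeq (he : StrictMono e) (t : Fin s) :
    IsGapAt (blockSeq e α) (partSum α t) (gapLen s e t) (gapEnd e t) := by
  intro j
  have hgap : gapLen s e t = gapEnd e t - e t - 1 := rfl
  have hlt : (e t : ℕ) < gapEnd e t := by
    unfold gapEnd
    split_ifs with h
    exacts [he (Fin.lt_def.2 (Nat.lt_succ_self _)), (e t).2]
  constructor
  · intro hj
    have : blockSeq e α j ≤ e t := he.monotone ((lt_partSum_iff α j t).1 hj)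
    omega
  · intro hj
    have htj : t < (finSigmaFinEquiv.symm j).1 :=
      not_le.1 fun h => hj.not_gt ((lt_partSum_iff α j t).2 h)
    have hts : (t : ℕ) + 1 < s := (Nat.succ_le_of_lt htj).trans_lt (Fin.is_lt _)
    rw [gapEnd, dif_pos hts]
    exact he.monotone (Fin.le_def.2 (Nat.succ_le_of_lt htj))

lemma partSum_le_sum (t : Fin s) : partSum α t ≤ ∑ t, α t :=
  sum_le_sum_of_subset (filter_subset _ _)

lemma strictMono_partSum (hα : ∀ t, 0 < α t) : StrictMono (partSum α) := fun t t' htt' => by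
  have hsub : insert t' (Iic t) ⊆ Iic t' :=
    insert_subset (mem_Iic.2 le_rfl) fun i hi => mem_Iic.2 ((mem_Iic.1 hi).trans htt'.le)
  have := sum_le_sum_of_subset (f := α) hsub
  rw [sum_insert (fun h => (mem_Iic.1 h).not_gt htt')] at this
  rw [partSum_eq_sum_Iic, partSum_eq_sum_Iic]
  have := hα t'
  omega

def blockFamily (t : Fin s) : Finset (ℕ →₀ ℕ) :=
  shiftFamily (blockSeq e α) (partSum α t) (gapLen s e t)

lemma card_blockFamily (he : StrictMono e) (t : Fin s) :
    #(blockFamily e α t) = (partSum α t + gapLen s e t).choose (gapLen s e t) :=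
  (isGapAt_blockSeq e α he t).card_shiftFamily (monotone_blockSeq e α he.monotone)
    (partSum_le_sum α t)

lemma blockFamily_inter_subset (he : StrictMono e) (hα : ∀ t, 0 < α t) {t t' : Fin s}
    (htt' : t ≠ t') :
    blockFamily e α t ∩ blockFamily e α t' ⊆ {seqMonomial (blockSeq e α)} := by
  have ha := monotone_blockSeq e α he.monotone
  rcases htt'.lt_or_gt with h | h
  · exact (isGapAt_blockSeq e α he t).shiftFamily_inter_subset ha (isGapAt_blockSeq e α he t')
      (strictMono_partSum α hα h) (partSum_le_sum α t')
  · rw [inter_comm]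
    exact (isGapAt_blockSeq e α he t').shiftFamily_inter_subset ha (isGapAt_blockSeq e α he t)
      (strictMono_partSum α hα h) (partSum_le_sum α t)

lemma insert_biUnion_blockFamily_subset (he : StrictMono e) :
    ↑(insert (seqMonomial (blockSeq e α)) (univ.biUnion (blockFamily e α))) ⊆
      Finsupp.mapDomain Fin.val '' borelPSet (∑ t, Finsupp.single (e t) (α t)) := by
  have hA := (seqMonomial_blockSeq e α).symm
  simp only [coe_insert, coe_biUnion, coe_univ, Set.mem_univ, Set.iUnion_true,
    Set.insert_subset_iff, Set.iUnion_subset_iff]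
  exact ⟨⟨_, ⟨id, fun _ => le_rfl, Finsupp.mapDomain_id.symm⟩, hA⟩, fun t =>
    (isGapAt_blockSeq e α he t).shiftFamily_subset_image_borelPSet
      (monotone_blockSeq e α he.monotone) (fun j => (e _).2) (gapEnd_le e t) hA⟩

end Blocks

/-- lower bound for the number of monomials Borel-specializing to
`x^A = x_{i_1}^{α_{i_1}} ⋯ x_{i_s}^{α_{i_s}}` (here `e t` is the 0-based index of the
1-based variable index `i_{t+1}`, so the gaps `i_{t+1} - i_t - 1` agree):
`|P(x^A)| ≥ ∑_{t=1}^{s} C(α_{i_1}+⋯+α_{i_t} + i_{t+1}-i_t-1, i_{t+1}-i_t-1) - s + 1`. -/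
theorem stmt2 {n : ℕ} (s : ℕ) (e : Fin s → Fin n) (he : StrictMono e)
    (α : Fin s → ℕ) (hα : ∀ t, 0 < α t) :
    (∑ t : Fin s, (partSum α t + gapLen s e t).choose (gapLen s e t)) - s + 1 ≤
      (borelPSet (∑ t : Fin s, Finsupp.single (e t) (α t))).ncard := by
  calc _ = ∑ t, #(blockFamily e α t) - #(univ : Finset (Fin s)) + 1 := by
        simp only [card_blockFamily e α he, card_univ, Fintype.card_fin]
    _ ≤ ∑ t, (#(blockFamily e α t) - 1) + 1 := by
        gcongr
        exact sum_tsub_card_le_sum_tsub_one _ _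
    _ ≤ #(insert (seqMonomial (blockSeq e α)) (univ.biUnion (blockFamily e α))) :=
        sum_card_sub_one_add_one_le_card_insert_biUnion _ _ _
          fun t _ t' _ htt' => blockFamily_inter_subset e α he hα htt'
    _ ≤ _ := card_le_ncard_of_coe_subset_image (Finsupp.mapDomain_injective Fin.val_injective)
        (borelPSet_finite _) (insert_biUnion_blockFamily_subset e α he)
end
end

section
/- Let I be a strongly stable monomial ideal in R = k[x_1,...,x_n]. For s ≥ dim R/I, the reduction number of R/I with respect to the reduction generated by x_{n-s+1},...,x_n equals min{t : x_{n-s}^{t+1} ∈ I}. -/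
open MvPolynomial

noncomputable section

/-!
Everything happens monomial by monomial. A monomial `x^A` lies in `(x_i : i > m) + I` iff it
involves some `x_i` with `i > m` or lies in `I`. Strong stability lets one replace factors `x_m`
by `x_j` with `j ≤ m` one at a time, so `x_m^d ∈ I` forces every monomial of degree `d` in the
variables `x_j`, `j ≤ m`, into `I`. Hence all monomials of degree `t > r` lie in
`(x_i : i > m) + I` exactly when `x_m^{r+1} ∈ I`. Variables are indexed from `0`, so the
informal `x_{n-s}` is `x_m` with `m = n - s - 1`.
-/

namespace MvPolynomial

variable {σ R : Type*} [CommSemiring R]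

theorem monomial_one_mem_of_le {I : Ideal (MvPolynomial σ R)} {A B : σ →₀ ℕ}
    (hA : monomial A (1 : R) ∈ I) (hAB : A ≤ B) : monomial B (1 : R) ∈ I :=
  I.mem_of_dvd (monomial_dvd_monomial.mpr ⟨Or.inr hAB, one_dvd _⟩) hA

theorem monomial_one_mem_span_monomial_image_iff [Nontrivial R] {A : σ →₀ ℕ}
    {S : Set (σ →₀ ℕ)} :
    monomial A (1 : R) ∈ Ideal.span ((fun B => monomial B (1 : R)) '' S) ↔
      ∃ B ∈ S, B ≤ A := by
  classical
  simp [mem_ideal_span_monomial_image, support_monomial]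

theorem mem_span_X_image_sup_span_monomial_image_iff [Nontrivial R] {T : Set σ}
    {S : Set (σ →₀ ℕ)} {p : MvPolynomial σ R} :
    p ∈ Ideal.span (X '' T) ⊔ Ideal.span ((fun B => monomial B (1 : R)) '' S) ↔
      ∀ A ∈ p.support, (∃ i ∈ T, A i ≠ 0) ∨
        monomial A (1 : R) ∈ Ideal.span ((fun B => monomial B (1 : R)) '' S) := by
  have hX : (X '' T : Set (MvPolynomial σ R)) =
      (fun B => monomial B (1 : R)) '' ((fun i => Finsupp.single i 1) '' T) := by
    rw [Set.image_image]; rfl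
  rw [hX, ← Ideal.span_union, ← Set.image_union, mem_ideal_span_monomial_image]
  refine forall₂_congr fun A _ => ?_
  rw [monomial_one_mem_span_monomial_image_iff]
  simp [or_and_right, exists_or, Finsupp.single_le_iff, Nat.one_le_iff_ne_zero]

end MvPolynomial

section

open Finsupp

variable {k : Type*} [Field k] {n : ℕ} {I : Ideal (MvPolynomial (Fin n) k)}

theorem IsMonomialIdeal.mem_span_X_image_sup_iff (hI : IsMonomialIdeal I) {T : Set (Fin n)}
    {p : MvPolynomial (Fin n) k} :
    p ∈ Ideal.span (X '' T) ⊔ I ↔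
      ∀ A ∈ p.support, (∃ i ∈ T, A i ≠ 0) ∨ monomial A (1 : k) ∈ I := by
  obtain ⟨S, rfl⟩ := hI
  exact mem_span_X_image_sup_span_monomial_image_iff

namespace StronglyStable

theorem monomial_add_single_mem (hI : StronglyStable I) {A : Fin n →₀ ℕ} {i j : Fin n}
    (hji : j ≤ i) (b : ℕ) (h : monomial (A + single i b) (1 : k) ∈ I) :
    monomial (A + single j b) (1 : k) ∈ I := by
  induction b generalizing A with
  | zero => simpa using h
  | succ b ih =>
    have h' := hI _ i j h (by simp) hji
    rw [single_add, ← add_assoc, add_tsub_cancel_right, add_right_comm] at h'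
    simpa only [add_assoc, ← single_add, add_comm 1 b] using ih h'

theorem monomial_add_mem_of_support_le (hI : StronglyStable I) {m : Fin n} {C : Fin n →₀ ℕ}
    (hC : ∀ i, C i ≠ 0 → i ≤ m) {A : Fin n →₀ ℕ}
    (h : monomial (A + single m C.degree) (1 : k) ∈ I) : monomial (A + C) (1 : k) ∈ I := by
  induction C using Finsupp.induction_linear generalizing A with
  | zero => simpa using h
  | add f g hf hg =>
    rw [map_add, single_add, ← add_assoc] at h
    have hAg := hg (fun i hi => hC i (by rw [Finsupp.add_apply]; omega)) h
    rw [add_right_comm] at hAg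
    simpa only [add_right_comm, add_assoc] using
      hf (fun i hi => hC i (by rw [Finsupp.add_apply]; omega)) hAg
  | single a b =>
    rcases eq_or_ne b 0 with rfl | hb
    · simpa using h
    · exact hI.monomial_add_single_mem (hC a (by simpa using hb)) b (by simpa using h)

theorem forall_isHomogeneous_mem_span_X_sup_iff (hI : StronglyStable I)
    (hmon : IsMonomialIdeal I) (m : Fin n) (r : ℕ) :
    (∀ t > r, ∀ p : MvPolynomial (Fin n) k, p.IsHomogeneous t →
        p ∈ Ideal.span (X '' {i | m < i}) ⊔ I) ↔
      monomial (single m (r + 1)) (1 : k) ∈ I := by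
  constructor
  · intro h
    have hx := h (r + 1) r.lt_succ_self _ (isHomogeneous_monomial 1 (degree_single m (r + 1)))
    rw [hmon.mem_span_X_image_sup_iff] at hx
    refine (hx _ (by simp)).resolve_left ?_
    rintro ⟨i, hmi, hi⟩
    rw [single_apply_ne_zero] at hi
    exact hmi.ne' hi.1
  · intro h t ht p hp
    rw [hmon.mem_span_X_image_sup_iff]
    intro A hA
    have hdeg : A.degree = t := by
      by_contra hne
      exact MvPolynomial.mem_support_iff.mp hA (hp.coeff_eq_zero hne)
    by_cases hT : ∃ i ∈ {i | m < i}, A i ≠ 0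
    · exact Or.inl hT
    · push Not at hT
      have hmA : monomial (0 + single m A.degree) (1 : k) ∈ I :=
        monomial_one_mem_of_le h (by rw [hdeg, zero_add, single_le_iff, single_eq_same]; exact ht)
      right
      simpa using
        hI.monomial_add_mem_of_support_le (fun i hi => not_lt.mp fun hmi => hi (hT i hmi)) hmA

end StronglyStable

end

/-- For a strongly stable monomial ideal `I` and `s ≥ dim R/I`,
`r_{(x_{n-s+1},…,x_n)}(R/I) = min {t | x_{n-s}^{t+1} ∈ I}`. -/
theorem stmt6 {k : Type*} [Field k] {n : ℕ} (I : Ideal (MvPolynomial (Fin n) k))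
    (hmon : IsMonomialIdeal I) (hss : StronglyStable I)
    (s : ℕ) (hsn : s < n) :
    redNum (lastVars k n s) I =
      sInf {t : ℕ | monomial (Finsupp.single (⟨n - s - 1, by omega⟩ : Fin n) (t + 1)) (1 : k) ∈ I} := by
  set m : Fin n := ⟨n - s - 1, by omega⟩
  have hlast : lastVars k n s = Ideal.span (X '' {i | m < i}) := by
    rw [lastVars]
    congr 3
    ext i
    simp only [Fin.lt_def, m]
    omega
  rw [redNum, hlast]
  congr 1
  ext r
  exact hss.forall_isHomogeneous_mem_span_X_sup_iff hmon m r
end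
end

section
/- Every strongly stable monomial ideal in k[x_1,...,x_n] is Borel-fixed, i.e., fixed by every upper triangular invertible linear change of variables. -/
open MvPolynomial

noncomputable section

lemma monDeg_add {n : ℕ} (A B : Fin n →₀ ℕ) : monDeg (A + B) = monDeg A + monDeg B := by
  simp [monDeg, Finsupp.sum_add_index]

lemma monDeg_eq_zero {n : ℕ} (A : Fin n →₀ ℕ) (h : monDeg A = 0) : A = 0 := by
  ext i
  by_cases hi : i ∈ A.support
  · exact absurd (Finset.sum_eq_zero_iff.mp h i hi) (Finsupp.mem_support_iff.mp hi)
  · simpa using Finsupp.notMem_support_iff.mp hi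

lemma key {k : Type*} [Field k] {n : ℕ} (I : Ideal (MvPolynomial (Fin n) k))
    (hss : StronglyStable I) (g : Matrix (Fin n) (Fin n) k)
    (hg : ∀ i j, i < j → g i j = 0) :
    ∀ (d : ℕ) (A B : Fin n →₀ ℕ), monDeg A = d → monomial (A + B) (1:k) ∈ I →
      (aeval (fun i => ∑ j, MvPolynomial.C (g i j) * X j) (monomial A (1:k))) * monomial B 1 ∈
        Submodule.span k ((fun C0 => monomial C0 (1:k)) '' {C0 | monomial C0 (1:k) ∈ I}) := by
  intro d
  induction d with
  | zero =>
    intro A B hdA hAB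
    have hA0 : A = 0 := monDeg_eq_zero A hdA
    subst hA0
    rw [show monomial (0 : Fin n →₀ ℕ) (1:k) = 1 from by simp, map_one, one_mul]
    exact Submodule.subset_span ⟨B, by simpa using hAB, rfl⟩
  | succ d ih =>
    intro A B hdA hAB
    have hAne : A ≠ 0 := by
      intro h; rw [h] at hdA; simp [monDeg] at hdA
    obtain ⟨i, hi⟩ := Finsupp.ne_iff.mp hAne
    simp only [Finsupp.coe_zero, Pi.zero_apply] at hi
    set A' := A - Finsupp.single i 1 with hA'def
    have hA : A = A' + Finsupp.single i 1 := by
      rw [hA'def]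
      ext a
      simp only [Finsupp.add_apply, Finsupp.tsub_apply, Finsupp.single_apply]
      rcases eq_or_ne i a with rfl | hne
      · simp only [↓reduceIte]; omega
      · simp only [if_neg hne]; omega
    have hdA' : monDeg A' = d := by
      have h1 : monDeg (Finsupp.single i 1 : Fin n →₀ ℕ) = 1 := by
        simp [monDeg, Finsupp.sum_single_index]
      rw [hA, monDeg_add, h1] at hdA
      omega
    have hexp : (aeval (fun i => ∑ j, MvPolynomial.C (g i j) * X j) (monomial A (1:k)))
        * monomial B 1
        = ∑ j, g i j • ((aeval (fun i => ∑ j, MvPolynomial.C (g i j) * X j) (monomial A' (1:k)))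
            * monomial (B + Finsupp.single j 1) 1) := by
      rw [hA, show monomial (A' + Finsupp.single i 1) (1:k) = monomial A' 1 * X i from by
        rw [X, monomial_mul, mul_one], map_mul, aeval_X]
      rw [Finset.mul_sum, Finset.sum_mul]
      refine Finset.sum_congr rfl fun j _ => ?_
      rw [smul_eq_C_mul, show monomial (B + Finsupp.single j 1) (1:k)
        = X j * monomial B 1 from by rw [X, monomial_mul, one_mul, add_comm]]
      ring
    rw [hexp]
    refine Submodule.sum_mem _ fun j _ => ?_
    rcases lt_or_ge i j with hij | hji
    · rw [hg i j hij, zero_smul]; exact Submodule.zero_mem _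
    · refine Submodule.smul_mem _ _ (ih A' (B + Finsupp.single j 1) hdA' ?_)
      have := hss (A + B) i j hAB (by
        simp only [Finsupp.add_apply]; omega) hji
      have heq : A + B - Finsupp.single i 1 + Finsupp.single j 1
          = A' + (B + Finsupp.single j 1) := by
        rw [hA'def]
        ext a
        simp only [Finsupp.add_apply, Finsupp.tsub_apply, Finsupp.single_apply]
        rcases eq_or_ne i a with rfl | hne
        · simp only [↓reduceIte]; split_ifs <;> omega
        · simp only [if_neg hne]; split_ifs <;> omega
      rwa [heq] at this

lemma comp_eq {k : Type*} [Field k] {n : ℕ} (a b : Matrix (Fin n) (Fin n) k) :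
    (aeval (fun i => ∑ j, MvPolynomial.C (b i j) * X j) :
        MvPolynomial (Fin n) k →ₐ[k] MvPolynomial (Fin n) k).comp
      (aeval (fun i => ∑ j, MvPolynomial.C (a i j) * X j)) =
    (aeval (fun i => ∑ j, MvPolynomial.C ((a * b) i j) * X j)) := by
  rw [comp_aeval]
  congr 1
  funext i
  rw [map_sum]
  simp only [map_mul, aeval_C, aeval_X, algebraMap_eq, Finset.mul_sum]
  rw [Finset.sum_comm]
  refine Finset.sum_congr rfl fun l _ => ?_
  rw [Matrix.mul_apply, map_sum, Finset.sum_mul]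
  refine Finset.sum_congr rfl fun j _ => ?_
  rw [map_mul]
  ring

lemma one_eq {k : Type*} [Field k] {n : ℕ} :
    (aeval (fun i => ∑ j, MvPolynomial.C ((1 : Matrix (Fin n) (Fin n) k) i j) * X j) :
      MvPolynomial (Fin n) k →ₐ[k] MvPolynomial (Fin n) k) = AlgHom.id k _ := by
  have : (fun i => ∑ j, MvPolynomial.C ((1 : Matrix (Fin n) (Fin n) k) i j) * X j)
      = (X : Fin n → MvPolynomial (Fin n) k) := by
    funext i
    simp [Matrix.one_apply, apply_ite (MvPolynomial.C : k → MvPolynomial (Fin n) k),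
      ite_mul, Finset.sum_ite_eq]
  rw [this, aeval_X_left]

lemma map_map_alg {k : Type*} [Field k] {n : ℕ} (I : Ideal (MvPolynomial (Fin n) k))
    (f g : MvPolynomial (Fin n) k →ₐ[k] MvPolynomial (Fin n) k) :
    (I.map f).map g = I.map (g.comp f) := by
  have h1 : I.map f = I.map f.toRingHom := rfl
  have h2 : ∀ J : Ideal (MvPolynomial (Fin n) k), J.map g = J.map g.toRingHom := fun _ => rfl
  have h3 : I.map (g.comp f) = I.map (g.toRingHom.comp f.toRingHom) := rfl
  rw [h1, h2, h3, Ideal.map_map]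


/-- Every strongly stable monomial ideal is Borel-fixed. -/
theorem stmt7 {k : Type*} [Field k] {n : ℕ} (I : Ideal (MvPolynomial (Fin n) k))
    (hmon : IsMonomialIdeal I) (hss : StronglyStable I) :
    IsBorelFixed I := by
  intro g hdet htri
  have main : ∀ h : Matrix (Fin n) (Fin n) k, (∀ i j : Fin n, i < j → h i j = 0) →
      I.map (aeval (fun i => ∑ j, MvPolynomial.C (h i j) * X j) :
        MvPolynomial (Fin n) k →ₐ[k] MvPolynomial (Fin n) k) ≤ I := by
    intro h hh
    obtain ⟨S, hS⟩ := hmon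
    conv_lhs => rw [hS]
    rw [Ideal.map_span, Ideal.span_le]
    rintro _ ⟨_, ⟨A, hAS, rfl⟩, rfl⟩
    have hAI : monomial A (1:k) ∈ I := by rw [hS]; exact Ideal.subset_span ⟨A, hAS, rfl⟩
    have hk := key I hss h hh (monDeg A) A 0 rfl (by simpa using hAI)
    rw [show monomial (0 : Fin n →₀ ℕ) (1:k) = 1 from by simp, mul_one] at hk
    have hspan : Submodule.span k ((fun C0 => monomial C0 (1:k)) '' {C0 | monomial C0 (1:k) ∈ I})
        ≤ I.restrictScalars k := by
      rw [Submodule.span_le]; rintro _ ⟨C0, hC0, rfl⟩; exact hC0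
    exact hspan hk
  refine le_antisymm (main g htri) ?_
  have hinst : Invertible g := g.invertibleOfIsUnitDet hdet
  have hinvtri : ∀ i j : Fin n, i < j → g⁻¹ i j = 0 := by
    have htri' : g.BlockTriangular (OrderDual.toDual : Fin n → (Fin n)ᵒᵈ) :=
      fun i j hij => htri i j hij
    exact fun i j hij => Matrix.blockTriangular_inv_of_blockTriangular htri' hij
  have h2 : (I.map (aeval (fun i => ∑ j, MvPolynomial.C (g⁻¹ i j) * X j) :
        MvPolynomial (Fin n) k →ₐ[k] MvPolynomial (Fin n) k)).map
      (aeval (fun i => ∑ j, MvPolynomial.C (g i j) * X j) :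
        MvPolynomial (Fin n) k →ₐ[k] MvPolynomial (Fin n) k) = I := by
    rw [map_map_alg, comp_eq, Matrix.nonsing_inv_mul g hdet, one_eq]
    exact Ideal.map_id I
  calc I = _ := h2.symm
    _ ≤ I.map (aeval (fun i => ∑ j, MvPolynomial.C (g i j) * X j) :
        MvPolynomial (Fin n) k →ₐ[k] MvPolynomial (Fin n) k) :=
      Ideal.map_mono (main g⁻¹ hinvtri)
end
end

section
/- For integers d ≥ 1 and e ≥ 2, and t = d(e−2)+2, the inequality (e−1)·C(de−d, d−1) + C(de−d+1, d−1) < C(de−d+2, d) holds. -/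
open MvPolynomial

noncomputable section

/-- the numerical inequality
`(e-1)·C(de-d, d-1) + C(de-d+1, d-1) < C(de-d+2, d)` for `d ≥ 1`, `e ≥ 2`. -/
theorem stmt16 (d e : ℕ) (hd : 1 ≤ d) (he : 2 ≤ e) :
    (e - 1) * (d * e - d).choose (d - 1) + (d * e - d + 1).choose (d - 1) <
      (d * e - d + 2).choose d := by
  obtain ⟨c, rfl⟩ : ∃ c, d = c + 1 := ⟨d - 1, (Nat.succ_pred_eq_of_pos hd).symm⟩
  set m := (c + 1) * e - (c + 1) with hm
  have hme : m = (c + 1) * (e - 1) := by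
    rw [hm, Nat.mul_sub, Nat.mul_one]
  have hcm : c + 1 ≤ m := by
    rw [hme]
    have : 1 ≤ e - 1 := by omega
    nlinarith
  have hpos : 0 < m.choose c := Nat.choose_pos (by omega)
  simp only [Nat.add_sub_cancel]
  have key : (e - 1) * m.choose c < (m + 1).choose (c + 1) := by
    have hid : (m + 1) * m.choose c = (m + 1).choose (c + 1) * (c + 1) :=
      Nat.add_one_mul_choose_eq m c
    have h1 : (e - 1) * m.choose c * (c + 1) < (m + 1).choose (c + 1) * (c + 1) := by
      calc (e - 1) * m.choose c * (c + 1) = m * m.choose c := by rw [hme]; ring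
        _ < (m + 1) * m.choose c := by
            exact (Nat.mul_lt_mul_right hpos).mpr (by omega)
        _ = (m + 1).choose (c + 1) * (c + 1) := hid
    exact Nat.lt_of_mul_lt_mul_right h1
  have pascal : (m + 2).choose (c + 1) = (m + 1).choose c + (m + 1).choose (c + 1) :=
    Nat.choose_succ_succ' (m + 1) c
  omega
end
end
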